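/- arXiv:1506.04504 — 2 statements merged into one kernel-verified Lean document; each statement's English description precedes it below -/
import Mathlib

section
/- Let y₁, y₂ ∈ ℝ^d and let x ∈ ℝ^d satisfy 2|x|² = |y₁||y₂| - y₁·y₂. Define z = 2|x|( y₂(|x|+|y₁|) - y₁(|x|+|y₂|) ) / (|y₁|+|y₂|+2|x|) (assuming the denominator is nonzero). Then |z| = |y₁||y₂| - y₁·y₂. -/
open scoped RealInnerProductSpace

/-- Let `y₁, y₂ ∈ ℝ^d` and `x ∈ ℝ^d` satisfy `2|x|² = |y₁||y₂| - y₁·y₂`. Define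
`z = 2|x|( y₂(|x|+|y₁|) - y₁(|x|+|y₂|) ) / (|y₁|+|y₂|+2|x|)` (the denominator being nonzero).
Then `|z| = |y₁||y₂| - y₁·y₂`. -/
theorem stmt3 (d : ℕ) (y₁ y₂ x : EuclideanSpace ℝ (Fin d))
    (hx : 2 * ‖x‖ ^ 2 = ‖y₁‖ * ‖y₂‖ - ⟪y₁, y₂⟫)
    (hden : 0 < ‖y₁‖ + ‖y₂‖ + 2 * ‖x‖) :
    ‖(2 * ‖x‖ / (‖y₁‖ + ‖y₂‖ + 2 * ‖x‖)) •
        ((‖x‖ + ‖y₁‖) • y₂ - (‖x‖ + ‖y₂‖) • y₁)‖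
      = ‖y₁‖ * ‖y₂‖ - ⟪y₁, y₂⟫ := by
  have hx0 : (0:ℝ) ≤ ‖x‖ := norm_nonneg _
  have h1 : (0:ℝ) ≤ ‖x‖ + ‖y₁‖ := by positivity
  have h2 : (0:ℝ) ≤ ‖x‖ + ‖y₂‖ := by positivity
  have hw : ‖(‖x‖ + ‖y₁‖) • y₂ - (‖x‖ + ‖y₂‖) • y₁‖
      = ‖x‖ * (‖y₁‖ + ‖y₂‖ + 2 * ‖x‖) := by
    have hsq : ‖(‖x‖ + ‖y₁‖) • y₂ - (‖x‖ + ‖y₂‖) • y₁‖ ^ 2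
        = (‖x‖ * (‖y₁‖ + ‖y₂‖ + 2 * ‖x‖)) ^ 2 := by
      rw [@norm_sub_sq_real, norm_smul, norm_smul, real_inner_smul_left,
        real_inner_smul_right, Real.norm_eq_abs, Real.norm_eq_abs,
        abs_of_nonneg h1, abs_of_nonneg h2]
      have hc : (⟪y₂, y₁⟫ : ℝ) = ‖y₁‖ * ‖y₂‖ - 2 * ‖x‖ ^ 2 := by
        rw [real_inner_comm]; linarith
      linear_combination (-(2 * (‖x‖ + ‖y₁‖) * (‖x‖ + ‖y₂‖))) * hc
    exact (sq_eq_sq₀ (norm_nonneg _) (mul_nonneg hx0 hden.le)).mp hsq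
  rw [norm_smul, hw, Real.norm_eq_abs, abs_of_nonneg (by positivity), ← hx]
  field_simp
end

section
/- For 0 < δ < 1/100 and σ > (d-1)/2 with d ≥ 2, there exist constants c, C > 0 depending only on d and σ such that c δ^{(d-1)/2 - σ} ≤ ∫₀¹ (1-t²)^{(d-3)/2} (1-(1-δ)t)^{-σ} dt ≤ C δ^{(d-1)/2 - σ}. -/
/-!
Write the integrand as `(1 - t)^a (1 + t)^a (1 - (1 - δ) t)^(-σ)` with `a = (d - 3)/2 > -1`; the
factor `(1 + t)^a` lies between `min 1 (2^a)` and `max 1 (2^a)`. Split `[0, 1]` at `1 - δ`.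
On `[1 - δ, 1]` the base `1 - (1 - δ) t` lies between `δ` and `2δ`, so this piece is
comparable to `δ^(-σ) ∫_{1-δ}^1 (1 - t)^a = δ^(a+1-σ)/(a+1)`, which already gives the lower
bound. On `[0, 1 - δ]` the base dominates `1 - t`, and since `a - σ < -1` the integral of
`(1 - t)^(a-σ)` there is at most `δ^(a+1-σ)/(σ - a - 1)`.
-/

open MeasureTheory Set Real intervalIntegral

section PointwiseBounds

variable {a δ t : ℝ}

lemma min_one_two_rpow_le_one_add_rpow (ht0 : 0 ≤ t) (ht1 : t ≤ 1) :
    min 1 (2 ^ a) ≤ (1 + t) ^ a := by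
  rcases le_or_gt 0 a with ha | ha
  · exact (min_le_left _ _).trans (one_le_rpow (by linarith) ha)
  · exact (min_le_right _ _).trans (rpow_le_rpow_of_nonpos (by linarith) (by linarith) ha.le)

lemma one_add_rpow_le_max_one_two_rpow (ht0 : 0 ≤ t) (ht1 : t ≤ 1) :
    (1 + t) ^ a ≤ max 1 (2 ^ a) := by
  rcases le_or_gt 0 a with ha | ha
  · exact (rpow_le_rpow (by linarith) (by linarith) ha).trans (le_max_right _ _)
  · exact (rpow_le_one_of_one_le_of_nonpos (by linarith) ha.le).trans (le_max_left _ _)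

lemma one_sub_sq_rpow_eq (ht0 : -1 ≤ t) (ht1 : t ≤ 1) :
    (1 - t ^ 2) ^ a = (1 - t) ^ a * (1 + t) ^ a := by
  rw [← mul_rpow (sub_nonneg.2 ht1) (neg_le_iff_add_nonneg'.1 ht0)]
  ring_nf

lemma le_one_sub_mul (hδ : δ ≤ 1) (ht : t ≤ 1) : δ ≤ 1 - (1 - δ) * t := by
  nlinarith

lemma one_sub_le_one_sub_mul (hδ : 0 ≤ δ) (ht0 : 0 ≤ t) : 1 - t ≤ 1 - (1 - δ) * t := by
  nlinarith

lemma one_sub_mul_le_two_mul (hδ0 : 0 ≤ δ) (hδ1 : δ ≤ 1) (ht : 1 - δ ≤ t) :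
    1 - (1 - δ) * t ≤ 2 * δ := by
  nlinarith

end PointwiseBounds

section PowerIntegrals

variable {b δ : ℝ}

lemma intervalIntegrable_one_sub_rpow (hb : -1 < b) (u v : ℝ) :
    IntervalIntegrable (fun t : ℝ => (1 - t) ^ b) volume u v := by
  simpa using (intervalIntegrable_rpow' (a := 1 - u) (b := 1 - v) hb).comp_sub_left 1

lemma intervalIntegrable_one_sub_rpow_of_pos (hδ : 0 < δ) :
    IntervalIntegrable (fun t : ℝ => (1 - t) ^ b) volume 0 (1 - δ) := by
  simpa using (intervalIntegrable_rpow (r := b)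
    (Or.inr (notMem_uIcc_of_lt one_pos hδ))).comp_sub_left 1

lemma integral_one_sub_rpow_near_one (hb : -1 < b) :
    ∫ t in (1 - δ)..1, (1 - t) ^ b = δ ^ (b + 1) / (b + 1) := by
  rw [integral_comp_sub_left (fun s => s ^ b), sub_self, sub_sub_cancel,
    integral_rpow (Or.inl hb), zero_rpow (by linarith), sub_zero]

lemma integral_one_sub_rpow_le_of_lt_neg_one (hb : b < -1) (hδ : 0 < δ) :
    ∫ t in (0 : ℝ)..(1 - δ), (1 - t) ^ b ≤ δ ^ (b + 1) / -(b + 1) := by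
  rw [integral_comp_sub_left (fun s => s ^ b), sub_zero, sub_sub_cancel,
    integral_rpow (Or.inr ⟨hb.ne, notMem_uIcc_of_lt hδ one_pos⟩), one_rpow,
    ← neg_div_neg_eq, neg_sub]
  gcongr <;> linarith

end PowerIntegrals

noncomputable def kernelIntegrand (a σ δ t : ℝ) : ℝ :=
  (1 - t ^ 2) ^ a * (1 - (1 - δ) * t) ^ (-σ)

section KernelIntegrand

variable {a σ δ t : ℝ}

lemma kernelIntegrand_nonneg (hδ : 0 ≤ δ) (ht0 : 0 ≤ t) (ht1 : t ≤ 1) :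
    0 ≤ kernelIntegrand a σ δ t :=
  mul_nonneg (rpow_nonneg (by nlinarith) _)
    (rpow_nonneg ((sub_nonneg.2 ht1).trans (one_sub_le_one_sub_mul hδ ht0)) _)

lemma kernelIntegrand_le_of_near_one (hσ : 0 ≤ σ) (hδ0 : 0 < δ) (hδ1 : δ ≤ 1)
    (ht0 : 0 ≤ t) (ht1 : t ≤ 1) :
    kernelIntegrand a σ δ t ≤ max 1 (2 ^ a) * δ ^ (-σ) * (1 - t) ^ a := by
  rw [kernelIntegrand, one_sub_sq_rpow_eq (by linarith) ht1]
  have h1 := one_add_rpow_le_max_one_two_rpow (a := a) ht0 ht1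
  have h2 : (1 - (1 - δ) * t) ^ (-σ) ≤ δ ^ (-σ) :=
    rpow_le_rpow_of_nonpos hδ0 (le_one_sub_mul hδ1 ht1) (by linarith)
  calc (1 - t) ^ a * (1 + t) ^ a * (1 - (1 - δ) * t) ^ (-σ)
      ≤ (1 - t) ^ a * max 1 (2 ^ a) * δ ^ (-σ) := by
        gcongr
        exact rpow_nonneg (by linarith [le_one_sub_mul hδ1 ht1]) _
    _ = _ := by ring

lemma kernelIntegrand_le_of_far_from_one (hσ : 0 ≤ σ) (hδ : 0 ≤ δ) (ht0 : 0 ≤ t)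
    (ht1 : t < 1) :
    kernelIntegrand a σ δ t ≤ max 1 (2 ^ a) * (1 - t) ^ (a - σ) := by
  have hpos : 0 < 1 - t := by linarith
  rw [kernelIntegrand, one_sub_sq_rpow_eq (by linarith) ht1.le, sub_eq_add_neg a σ,
    rpow_add hpos]
  have h1 := one_add_rpow_le_max_one_two_rpow (a := a) ht0 ht1.le
  have h2 : (1 - (1 - δ) * t) ^ (-σ) ≤ (1 - t) ^ (-σ) :=
    rpow_le_rpow_of_nonpos hpos (one_sub_le_one_sub_mul hδ ht0) (by linarith)
  calc (1 - t) ^ a * (1 + t) ^ a * (1 - (1 - δ) * t) ^ (-σ)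
      ≤ (1 - t) ^ a * max 1 (2 ^ a) * (1 - t) ^ (-σ) := by
        gcongr
        exact rpow_nonneg (hpos.le.trans (one_sub_le_one_sub_mul hδ ht0)) _
    _ = _ := by ring

lemma le_kernelIntegrand_of_near_one (hσ : 0 ≤ σ) (hδ0 : 0 < δ) (hδ1 : δ ≤ 1)
    (ht0 : 1 - δ ≤ t) (ht1 : t ≤ 1) :
    min 1 (2 ^ a) * (2 * δ) ^ (-σ) * (1 - t) ^ a ≤ kernelIntegrand a σ δ t := by
  have ht0' : 0 ≤ t := by linarith
  rw [kernelIntegrand, one_sub_sq_rpow_eq (by linarith) ht1]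
  have h1 := min_one_two_rpow_le_one_add_rpow (a := a) ht0' ht1
  have h2 : (2 * δ) ^ (-σ) ≤ (1 - (1 - δ) * t) ^ (-σ) :=
    rpow_le_rpow_of_nonpos (by linarith [le_one_sub_mul hδ1 ht1])
      (one_sub_mul_le_two_mul hδ0.le hδ1 ht0) (by linarith)
  calc min 1 (2 ^ a) * (2 * δ) ^ (-σ) * (1 - t) ^ a
      = (1 - t) ^ a * min 1 (2 ^ a) * (2 * δ) ^ (-σ) := by ring
    _ ≤ _ := by gcongr

lemma intervalIntegrable_kernelIntegrand (ha : -1 < a) (hσ : 0 ≤ σ) (hδ0 : 0 < δ)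
    (hδ1 : δ ≤ 1) {u v : ℝ} (hu : u ∈ Icc 0 1) (hv : v ∈ Icc 0 1) :
    IntervalIntegrable (kernelIntegrand a σ δ) volume u v := by
  have hK : IntervalIntegrable (kernelIntegrand a σ δ) volume 0 1 := by
    refine ((intervalIntegrable_one_sub_rpow ha 0 1).const_mul
      (max 1 (2 ^ a) * δ ^ (-σ))).mono_fun ?_ ?_
    · unfold kernelIntegrand
      fun_prop
    · rw [Filter.EventuallyLE, ae_restrict_iff' measurableSet_uIoc]
      refine Filter.Eventually.of_forall fun t ht => ?_
      rw [uIoc_of_le zero_le_one] at ht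
      rw [norm_of_nonneg (kernelIntegrand_nonneg hδ0.le ht.1.le ht.2)]
      exact (kernelIntegrand_le_of_near_one hσ hδ0 hδ1 ht.1.le ht.2).trans (le_norm_self _)
  refine hK.mono_set ?_
  rw [uIcc_of_le zero_le_one]
  exact uIcc_subset_Icc hu hv

lemma setIntegral_kernelIntegrand_eq_add (ha : -1 < a) (hσ : 0 ≤ σ) (hδ0 : 0 < δ)
    (hδ1 : δ ≤ 1) :
    ∫ t in Ioo 0 1, kernelIntegrand a σ δ t =
      (∫ t in (0 : ℝ)..(1 - δ), kernelIntegrand a σ δ t) +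
        ∫ t in (1 - δ)..1, kernelIntegrand a σ δ t := by
  have h0 : (0 : ℝ) ∈ Icc 0 1 := left_mem_Icc.2 zero_le_one
  have h1 : (1 : ℝ) ∈ Icc 0 1 := right_mem_Icc.2 zero_le_one
  have hmid : 1 - δ ∈ Icc (0 : ℝ) 1 := ⟨by linarith, by linarith⟩
  rw [integral_add_adjacent_intervals (intervalIntegrable_kernelIntegrand ha hσ hδ0 hδ1 h0 hmid)
    (intervalIntegrable_kernelIntegrand ha hσ hδ0 hδ1 hmid h1), integral_of_le zero_le_one]
  exact setIntegral_congr_set Ioo_ae_eq_Ioc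

lemma mul_rpow_le_setIntegral_kernelIntegrand (ha : -1 < a) (hσ : 0 ≤ σ) (hδ0 : 0 < δ)
    (hδ1 : δ ≤ 1) :
    min 1 (2 ^ a) * 2 ^ (-σ) / (a + 1) * δ ^ (a + 1 - σ) ≤
      ∫ t in Ioo 0 1, kernelIntegrand a σ δ t := by
  have hmid : 1 - δ ∈ Icc (0 : ℝ) 1 := ⟨by linarith, by linarith⟩
  have hnear : ∫ t in (1 - δ)..1, min 1 (2 ^ a) * (2 * δ) ^ (-σ) * (1 - t) ^ a ≤
      ∫ t in (1 - δ)..1, kernelIntegrand a σ δ t :=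
    integral_mono_on (by linarith) ((intervalIntegrable_one_sub_rpow ha _ _).const_mul _)
      (intervalIntegrable_kernelIntegrand ha hσ hδ0 hδ1 hmid (right_mem_Icc.2 zero_le_one))
      fun t ht => le_kernelIntegrand_of_near_one hσ hδ0 hδ1 ht.1 ht.2
  have hfar : 0 ≤ ∫ t in (0 : ℝ)..(1 - δ), kernelIntegrand a σ δ t :=
    integral_nonneg (by linarith) fun t ht =>
      kernelIntegrand_nonneg hδ0.le ht.1 (by linarith [ht.2])
  rw [intervalIntegral.integral_const_mul, integral_one_sub_rpow_near_one ha] at hnear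
  rw [setIntegral_kernelIntegrand_eq_add ha hσ hδ0 hδ1]
  calc min 1 (2 ^ a) * 2 ^ (-σ) / (a + 1) * δ ^ (a + 1 - σ)
      = min 1 (2 ^ a) * (2 * δ) ^ (-σ) * (δ ^ (a + 1) / (a + 1)) := by
        rw [mul_rpow zero_le_two hδ0.le, sub_eq_neg_add, rpow_add hδ0]
        ring
    _ ≤ _ := by linarith

lemma setIntegral_kernelIntegrand_le_mul_rpow (ha : -1 < a) (hσ : a + 1 < σ) (hδ0 : 0 < δ)
    (hδ1 : δ ≤ 1) :
    ∫ t in Ioo 0 1, kernelIntegrand a σ δ t ≤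
      (max 1 (2 ^ a) / (σ - (a + 1)) + max 1 (2 ^ a) / (a + 1)) * δ ^ (a + 1 - σ) := by
  have hσ0 : 0 ≤ σ := by linarith
  have hmid : 1 - δ ∈ Icc (0 : ℝ) 1 := ⟨by linarith, by linarith⟩
  have hfar : ∫ t in (0 : ℝ)..(1 - δ), kernelIntegrand a σ δ t ≤
      ∫ t in (0 : ℝ)..(1 - δ), max 1 (2 ^ a) * (1 - t) ^ (a - σ) :=
    integral_mono_on (by linarith)
      (intervalIntegrable_kernelIntegrand ha hσ0 hδ0 hδ1 (left_mem_Icc.2 zero_le_one) hmid)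
      ((intervalIntegrable_one_sub_rpow_of_pos hδ0).const_mul _)
      fun t ht => kernelIntegrand_le_of_far_from_one hσ0 hδ0.le ht.1 (by linarith [ht.2])
  have hnear : ∫ t in (1 - δ)..1, kernelIntegrand a σ δ t ≤
      ∫ t in (1 - δ)..1, max 1 (2 ^ a) * δ ^ (-σ) * (1 - t) ^ a :=
    integral_mono_on (by linarith)
      (intervalIntegrable_kernelIntegrand ha hσ0 hδ0 hδ1 hmid (right_mem_Icc.2 zero_le_one))
      ((intervalIntegrable_one_sub_rpow ha _ _).const_mul _)
      fun t ht => kernelIntegrand_le_of_near_one hσ0 hδ0 hδ1 (by linarith [ht.1]) ht.2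
  rw [intervalIntegral.integral_const_mul] at hfar
  have hpow := integral_one_sub_rpow_le_of_lt_neg_one (b := a - σ) (by linarith) hδ0
  have hM : (0 : ℝ) ≤ max 1 (2 ^ a) := by positivity
  rw [intervalIntegral.integral_const_mul, integral_one_sub_rpow_near_one ha] at hnear
  rw [setIntegral_kernelIntegrand_eq_add ha hσ0 hδ0 hδ1]
  have hsplit : (max 1 (2 ^ a) / (σ - (a + 1)) + max 1 (2 ^ a) / (a + 1)) * δ ^ (a + 1 - σ) =
      max 1 (2 ^ a) * (δ ^ (a - σ + 1) / -(a - σ + 1)) +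
        max 1 (2 ^ a) * δ ^ (-σ) * (δ ^ (a + 1) / (a + 1)) := by
    rw [show a - σ + 1 = a + 1 - σ by ring, show -(a + 1 - σ) = σ - (a + 1) by ring,
      sub_eq_neg_add (a + 1), rpow_add hδ0]
    ring
  linarith [mul_le_mul_of_nonneg_left hpow hM]

theorem exists_bounds_setIntegral_kernelIntegrand (ha : -1 < a) (hσ : a + 1 < σ) :
    ∃ c C : ℝ, 0 < c ∧ 0 < C ∧ ∀ δ : ℝ, 0 < δ → δ ≤ 1 →
      c * δ ^ (a + 1 - σ) ≤ ∫ t in Ioo 0 1, kernelIntegrand a σ δ t ∧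
        ∫ t in Ioo 0 1, kernelIntegrand a σ δ t ≤ C * δ ^ (a + 1 - σ) := by
  have hM : (0 : ℝ) < max 1 (2 ^ a) := lt_max_of_lt_left one_pos
  refine ⟨min 1 (2 ^ a) * 2 ^ (-σ) / (a + 1),
    max 1 (2 ^ a) / (σ - (a + 1)) + max 1 (2 ^ a) / (a + 1),
    div_pos (by positivity) (by linarith),
    add_pos (div_pos hM (by linarith)) (div_pos hM (by linarith)), fun δ hδ0 hδ1 =>
      ⟨mul_rpow_le_setIntegral_kernelIntegrand ha (by linarith) hδ0 hδ1,
        setIntegral_kernelIntegrand_le_mul_rpow ha hσ hδ0 hδ1⟩⟩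

end KernelIntegrand

/-- For `0 < δ < 1/100` and `σ > (d-1)/2` with `d ≥ 2`, there exist constants
`c, C > 0` depending only on `d` and `σ` such that
`c δ^{(d-1)/2 - σ} ≤ ∫₀¹ (1-t²)^{(d-3)/2} (1-(1-δ)t)^{-σ} dt ≤ C δ^{(d-1)/2 - σ}`. -/
theorem stmt10 (d : ℕ) (hd : 2 ≤ d) (σ : ℝ) (hσ : ((d : ℝ) - 1) / 2 < σ) :
    ∃ c C : ℝ, 0 < c ∧ 0 < C ∧ ∀ δ : ℝ, 0 < δ → δ < 1 / 100 →
      c * δ ^ (((d : ℝ) - 1) / 2 - σ) ≤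
        (∫ t in Set.Ioo (0 : ℝ) 1, (1 - t ^ 2) ^ (((d : ℝ) - 3) / 2) * (1 - (1 - δ) * t) ^ (-σ))
      ∧ (∫ t in Set.Ioo (0 : ℝ) 1, (1 - t ^ 2) ^ (((d : ℝ) - 3) / 2) * (1 - (1 - δ) * t) ^ (-σ))
          ≤ C * δ ^ (((d : ℝ) - 1) / 2 - σ) := by
  have hd' : (2 : ℝ) ≤ d := by exact_mod_cast hd
  obtain ⟨c, C, hc, hC, hbounds⟩ :=
    exists_bounds_setIntegral_kernelIntegrand (a := ((d : ℝ) - 3) / 2) (σ := σ)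
      (by linarith) (by linarith)
  refine ⟨c, C, hc, hC, fun δ hδ0 hδ1 => ?_⟩
  rw [show ((d : ℝ) - 1) / 2 - σ = ((d : ℝ) - 3) / 2 + 1 - σ by ring]
  exact hbounds δ hδ0 (by linarith)
end
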